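/- Suppose the sketching assumption holds, i.e., ‖UᵀSᵢSᵢᵀU − I_ρ‖₂ ≤ η for every i ∈ {1,…,m} and ‖UᵀSSᵀU − I_ρ‖₂ ≤ η/√m. Define Γᵢ := H^{−1/2}(H − H̃ᵢ)H^{−1/2}. Then ‖Γᵢ‖₂ ≤ ϑ·η for every i, and ‖(1/m)∑ᵢ Γᵢ‖₂ ≤ ϑ·η/√m, where ϑ = σ_max(AᵀA)/(σ_max(AᵀA) + σ_min(M)). -/

import Mathlib

open Matrix

/-- Spectral norm of a real matrix: operator norm of the induced map between
Euclidean spaces. -/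
noncomputable def specNorm {m n : ℕ} (A : Matrix (Fin m) (Fin n) ℝ) : ℝ :=
  ‖LinearMap.toContinuousLinearMap (Matrix.toEuclideanLin A)‖

/-- Largest eigenvalue of a (symmetric) real matrix, as the supremum of its spectrum. -/
noncomputable def sigmaMax {d : ℕ} (A : Matrix (Fin d) (Fin d) ℝ) : ℝ :=
  sSup (spectrum ℝ A)

/-- Smallest eigenvalue of a (symmetric) real matrix, as the infimum of its spectrum. -/
noncomputable def sigmaMin {d : ℕ} (A : Matrix (Fin d) (Fin d) ℝ) : ℝ :=
  sInf (spectrum ℝ A)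

/-- The positive semidefinite square root of a positive semidefinite matrix
(the definition `Matrix.PosSemidef.sqrt` of the older Mathlib, since removed). -/
noncomputable def Matrix.PosSemidef.sqrt {n : Type*} [Fintype n] [DecidableEq n]
    {A : Matrix n n ℝ} (hA : A.PosSemidef) : Matrix n n ℝ :=
  hA.1.eigenvectorUnitary.1 * diagonal ((↑) ∘ (√·) ∘ hA.1.eigenvalues) *
  (star hA.1.eigenvectorUnitary : Matrix n n ℝ)

/-! Since the columns of `U` span the range of `A`, we have `A = U Uᵀ A`. Hence, with
`R = H^{-1/2}` and `C = Uᵀ A R`, every error factors as `Γᵢ = Cᵀ (I - Uᵀ Sᵢ Sᵢᵀ U) C`; since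
this is affine in `Sᵢ Sᵢᵀ`, the average factors in the same way with `S Sᵀ` in its place. Both
norms are therefore at most `‖Cᵀ C‖` times the corresponding sketching error. Finally
`Cᵀ C = R AᵀA R`, and `AᵀA ≤ σmax(AᵀA) I`, `σmin(M) I ≤ M` give `AᵀA ≤ ϑ H` in the Loewner
order, so conjugating by `R` yields `0 ≤ Cᵀ C ≤ ϑ I`. -/

open scoped Matrix.Norms.L2Operator MatrixOrder

theorem le_div_add_smul_add {E : Type*} [AddCommGroup E] [PartialOrder E] [IsOrderedAddMonoid E]
    [Module ℝ E] [PosSMulMono ℝ E] {P M e : E} {s t : ℝ} (hs : 0 ≤ s) (ht : 0 ≤ t)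
    (hP : P ≤ s • e) (hM : t • e ≤ M) : P ≤ (s / (s + t)) • (P + M) := by
  rcases (add_nonneg hs ht).eq_or_lt with hst | hst
  · obtain rfl : s = 0 := by linarith
    simpa using hP
  have htP : t • P ≤ s • M :=
    calc t • P ≤ t • s • e := smul_le_smul_of_nonneg_left hP ht
      _ = s • t • e := smul_comm t s e
      _ ≤ s • M := smul_le_smul_of_nonneg_left hM hs
  have hstP : (s + t) • P ≤ s • (P + M) := by
    rw [add_smul, smul_add]
    exact add_le_add_right htP _
  calc P = (s + t)⁻¹ • (s + t) • P := by rw [smul_smul, inv_mul_cancel₀ hst.ne', one_smul]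
    _ ≤ (s + t)⁻¹ • s • (P + M) := smul_le_smul_of_nonneg_left hstP (inv_nonneg.mpr hst.le)
    _ = (s / (s + t)) • (P + M) := by rw [smul_smul, div_eq_inv_mul]

namespace Matrix

section Transpose

variable {α : Type*} [CommRing α] {n d r : Type*} [Fintype n] [Fintype d] [Fintype r]

theorem mul_transpose_mul_of_range_le [DecidableEq r] {U : Matrix n r α} {A : Matrix n d α}
    (hU : Uᵀ * U = 1) (hA : LinearMap.range A.mulVecLin ≤ LinearMap.range U.mulVecLin) :
    U * (Uᵀ * A) = A := by
  classical
  refine ext_of_mulVec_single fun j => ?_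
  obtain ⟨w, hw⟩ := hA ⟨Pi.single j 1, rfl⟩
  simp only [mulVecLin_apply] at hw
  rw [← mulVec_mulVec, ← mulVec_mulVec, ← hw, mulVec_mulVec w Uᵀ U, hU, one_mulVec]

theorem conj_transpose_mul_mul_eq_of_mul_transpose_mul {U : Matrix n r α}
    {A : Matrix n d α} {R : Matrix d d α} (hUA : U * (Uᵀ * A) = A) (hR : Rᵀ = R)
    (X : Matrix n n α) :
    R * (Aᵀ * X * A) * R = (Uᵀ * A * R)ᵀ * (Uᵀ * X * U) * (Uᵀ * A * R) := by
  conv_lhs => rw [← hUA]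
  simp only [transpose_mul, transpose_transpose, hR, Matrix.mul_assoc]

end Transpose

theorem smul_sum_mul_one_sub_mul {𝕜 ι l n r : Type*} [Field 𝕜] [CharZero 𝕜] [Fintype ι]
    [Nonempty ι] [Fintype r] [DecidableEq r] (P : Matrix l r 𝕜) (Q : Matrix r n 𝕜)
    (W : ι → Matrix r r 𝕜) :
    (Fintype.card ι : 𝕜)⁻¹ • ∑ i, P * (1 - W i) * Q
      = P * (1 - (Fintype.card ι : 𝕜)⁻¹ • ∑ i, W i) * Q := by
  have hcard : (Fintype.card ι : 𝕜) ≠ 0 := Nat.cast_ne_zero.mpr Fintype.card_ne_zero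
  simp only [Matrix.mul_sub, Matrix.sub_mul, Finset.sum_sub_distrib, Matrix.mul_one, smul_sub,
    Finset.sum_const, Finset.card_univ, ← Nat.cast_smul_eq_nsmul 𝕜, smul_smul,
    inv_mul_cancel₀ hcard, one_smul, Matrix.mul_smul, Matrix.smul_mul, Matrix.mul_sum,
    Matrix.sum_mul]

theorem l2_opNorm_conjTranspose_mul_mul_le {𝕜 m n : Type*} [RCLike 𝕜] [Fintype m] [Fintype n]
    [DecidableEq m] [DecidableEq n] (C : Matrix m n 𝕜) (E : Matrix m m 𝕜) :
    ‖Cᴴ * E * C‖ ≤ ‖Cᴴ * C‖ * ‖E‖ :=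
  calc ‖Cᴴ * E * C‖ ≤ ‖Cᴴ‖ * ‖E‖ * ‖C‖ :=
        (l2_opNorm_mul _ _).trans (by gcongr; exact l2_opNorm_mul _ _)
    _ = ‖Cᴴ * C‖ * ‖E‖ := by
        rw [l2_opNorm_conjTranspose, l2_opNorm_conjTranspose_mul_self]; ring

theorem l2_opNorm_conj_one_sub_le {n d r : Type*} [Fintype n] [Fintype d] [Fintype r]
    [DecidableEq n] [DecidableEq d] [DecidableEq r] {U : Matrix n r ℝ} {A : Matrix n d ℝ}
    {R : Matrix d d ℝ} (hU : Uᵀ * U = 1) (hUA : U * (Uᵀ * A) = A) (hR : Rᵀ = R) (W : Matrix n n ℝ) :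
    ‖R * (Aᵀ * (1 - W) * A) * R‖ ≤ ‖R * (Aᵀ * A) * R‖ * ‖Uᵀ * W * U - 1‖ := by
  have hRAAR : R * (Aᵀ * A) * R = (Uᵀ * A * R)ᵀ * (Uᵀ * A * R) := by
    simpa only [Matrix.mul_one, hU] using conj_transpose_mul_mul_eq_of_mul_transpose_mul hUA hR 1
  have hcompress : Uᵀ * (1 - W) * U = 1 - Uᵀ * W * U := by
    rw [Matrix.mul_sub, Matrix.sub_mul, Matrix.mul_one, hU]
  rw [conj_transpose_mul_mul_eq_of_mul_transpose_mul hUA hR, hRAAR, hcompress, norm_sub_rev]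
  simpa only [conjTranspose_eq_transpose_of_trivial] using
    l2_opNorm_conjTranspose_mul_mul_le (Uᵀ * A * R) (1 - Uᵀ * W * U)

section Order

variable {n : Type*} [Fintype n] [DecidableEq n]

theorem l2_opNorm_le_of_nonneg_of_le_smul_one {X : Matrix n n ℝ} {c : ℝ} (hc : 0 ≤ c)
    (hX : 0 ≤ X) (hXc : X ≤ c • 1) : ‖X‖ ≤ c := by
  have hXsa : IsSelfAdjoint X := .of_nonneg hX
  rw [← Algebra.algebraMap_eq_smul_one, le_algebraMap_iff_spectrum_le hXsa] at hXc
  have hcfc := norm_cfc_le (p := IsSelfAdjoint) (f := id) (a := X) hc fun x hx => by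
    rw [id, Real.norm_of_nonneg (spectrum_nonneg_of_nonneg hX hx)]
    exact hXc x hx
  rwa [cfc_id ℝ X hXsa] at hcfc

theorem l2_opNorm_conj_le_of_le_smul {R H P : Matrix n n ℝ} {c : ℝ} (hc : 0 ≤ c)
    (hR : IsSelfAdjoint R) (hRH : R * H * R = 1) (hP : 0 ≤ P) (hPH : P ≤ c • H) :
    ‖R * P * R‖ ≤ c := by
  refine l2_opNorm_le_of_nonneg_of_le_smul_one hc (hR.conjugate_nonneg hP) ?_
  calc R * P * R ≤ R * (c • H) * R := hR.conjugate_le_conjugate hPH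
    _ = c • 1 := by rw [mul_smul_comm, smul_mul_assoc, hRH]

theorem PosSemidef.sqrt_eq_cfcSqrt {H : Matrix n n ℝ} (hH : H.PosSemidef) :
    hH.sqrt = CFC.sqrt H := by
  rw [CFC.sqrt_eq_real_sqrt H hH.nonneg, cfcₙ_eq_cfc, hH.1.cfc_eq, IsHermitian.cfc,
    Unitary.conjStarAlgAut_apply]
  rfl

theorem PosDef.isHermitian_inv_sqrt {H : Matrix n n ℝ} (hH : H.PosDef) :
    (hH.posSemidef.sqrt)⁻¹.IsHermitian := by
  rw [PosSemidef.sqrt_eq_cfcSqrt]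
  exact (CFC.sqrt_nonneg H).posSemidef.isHermitian.inv

theorem PosDef.inv_sqrt_mul_mul_inv_sqrt {H : Matrix n n ℝ} (hH : H.PosDef) :
    (hH.posSemidef.sqrt)⁻¹ * H * (hH.posSemidef.sqrt)⁻¹ = 1 := by
  rw [PosSemidef.sqrt_eq_cfcSqrt]
  have hdet : IsUnit (CFC.sqrt H).det :=
    (isUnit_iff_isUnit_det _).mp ((CFC.isUnit_sqrt_iff H hH.posSemidef.nonneg).mpr hH.isUnit)
  nth_rw 2 [← CFC.sqrt_mul_sqrt_self H hH.posSemidef.nonneg]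
  rw [← Matrix.mul_assoc, nonsing_inv_mul _ hdet, Matrix.one_mul, mul_nonsing_inv _ hdet]

end Order

end Matrix

section Spectrum

variable {d : ℕ} {X : Matrix (Fin d) (Fin d) ℝ}

theorem le_sigmaMax_smul_one (hX : X.IsHermitian) : X ≤ sigmaMax X • 1 := by
  rw [← Algebra.algebraMap_eq_smul_one, le_algebraMap_iff_spectrum_le hX.isSelfAdjoint]
  exact fun x hx => le_csSup (Matrix.finite_real_spectrum (A := X)).bddAbove hx

theorem sigmaMin_smul_one_le (hX : X.IsHermitian) : sigmaMin X • 1 ≤ X := by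
  rw [← Algebra.algebraMap_eq_smul_one, algebraMap_le_iff_le_spectrum hX.isSelfAdjoint]
  exact fun x hx => csInf_le (Matrix.finite_real_spectrum (A := X)).bddBelow hx

theorem sigmaMax_nonneg (hX : X.PosSemidef) : 0 ≤ sigmaMax X :=
  Real.sSup_nonneg fun _ hx => spectrum_nonneg_of_nonneg hX.nonneg hx

theorem sigmaMin_nonneg (hX : X.PosSemidef) : 0 ≤ sigmaMin X :=
  Real.sInf_nonneg fun _ hx => spectrum_nonneg_of_nonneg hX.nonneg hx

theorem le_sigmaMax_div_smul_add {M : Matrix (Fin d) (Fin d) ℝ} (hX : X.PosSemidef)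
    (hM : M.PosSemidef) : X ≤ (sigmaMax X / (sigmaMax X + sigmaMin M)) • (X + M) :=
  le_div_add_smul_add (sigmaMax_nonneg hX) (sigmaMin_nonneg hM) (le_sigmaMax_smul_one hX.1)
    (sigmaMin_smul_one_le hM.1)

theorem l2_opNorm_inv_sqrt_conj_le {M : Matrix (Fin d) (Fin d) ℝ} (hX : X.PosSemidef)
    (hM : M.PosSemidef) (hH : (X + M).PosDef) :
    ‖(hH.posSemidef.sqrt)⁻¹ * X * (hH.posSemidef.sqrt)⁻¹‖
      ≤ sigmaMax X / (sigmaMax X + sigmaMin M) :=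
  Matrix.l2_opNorm_conj_le_of_le_smul
    (div_nonneg (sigmaMax_nonneg hX) (add_nonneg (sigmaMax_nonneg hX) (sigmaMin_nonneg hM)))
    hH.isHermitian_inv_sqrt.isSelfAdjoint hH.inv_sqrt_mul_mul_inv_sqrt hX.nonneg
    (le_sigmaMax_div_smul_add hX hM)

end Spectrum

theorem gamma_bounds_general
    (n d ρ s m : ℕ) (hm : 0 < m)
    (η : ℝ)
    (A : Matrix (Fin n) (Fin d) ℝ)
    (U : Matrix (Fin n) (Fin ρ) ℝ)
    (hUorth : Uᵀ * U = 1)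
    (hUA : LinearMap.range U.mulVecLin = LinearMap.range A.mulVecLin)
    (M : Matrix (Fin d) (Fin d) ℝ) (hM : M.PosSemidef)
    (hH : (Aᵀ * A + M).PosDef)
    (S : Fin m → Matrix (Fin n) (Fin s) ℝ)
    (hSi : ∀ i, specNorm (Uᵀ * (S i * (S i)ᵀ) * U - 1) ≤ η)
    (hS : specNorm (Uᵀ * ((m : ℝ)⁻¹ • ∑ i, S i * (S i)ᵀ) * U - 1) ≤ η / Real.sqrt m)
    (Γ : Fin m → Matrix (Fin d) (Fin d) ℝ)
    (hΓ : ∀ i, Γ i = (Matrix.PosSemidef.sqrt hH.posSemidef)⁻¹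
      * ((Aᵀ * A + M) - (Aᵀ * (S i * (S i)ᵀ) * A + M)) * (Matrix.PosSemidef.sqrt hH.posSemidef)⁻¹)
    (ϑ : ℝ)
    (hϑ : ϑ = sigmaMax (Aᵀ * A) / (sigmaMax (Aᵀ * A) + sigmaMin M)) :
    (∀ i, specNorm (Γ i) ≤ ϑ * η) ∧
      specNorm ((m : ℝ)⁻¹ • ∑ i, Γ i) ≤ ϑ * η / Real.sqrt m := by
  set R := (Matrix.PosSemidef.sqrt hH.posSemidef)⁻¹
  have hRT : Rᵀ = R := by
    rw [← conjTranspose_eq_transpose_of_trivial]; exact hH.isHermitian_inv_sqrt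
  have hUUA : U * (Uᵀ * A) = A := mul_transpose_mul_of_range_le hUorth hUA.ge
  have hAA : (Aᵀ * A).PosSemidef := by
    simpa only [conjTranspose_eq_transpose_of_trivial] using posSemidef_conjTranspose_mul_self A
  have hRAAR : ‖R * (Aᵀ * A) * R‖ ≤ ϑ := by
    rw [hϑ]; exact l2_opNorm_inv_sqrt_conj_le hAA hM hH
  have hbound : ∀ (W : Matrix (Fin n) (Fin n) ℝ) (c : ℝ), specNorm (Uᵀ * W * U - 1) ≤ c →
      specNorm (R * (Aᵀ * (1 - W) * A) * R) ≤ ϑ * c := fun W c hW =>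
    (l2_opNorm_conj_one_sub_le hUorth hUUA hRT W).trans
      (mul_le_mul hRAAR hW (norm_nonneg _) ((norm_nonneg _).trans hRAAR))
  have hΓ' : ∀ i, Γ i = R * (Aᵀ * (1 - S i * (S i)ᵀ) * A) * R := fun i => by
    rw [hΓ i, add_sub_add_right_eq_sub, Matrix.mul_sub Aᵀ, Matrix.sub_mul, Matrix.mul_one]
  refine ⟨fun i => hΓ' i ▸ hbound _ _ (hSi i), ?_⟩
  have : Nonempty (Fin m) := Fin.pos_iff_nonempty.mp hm
  have havg : (m : ℝ)⁻¹ • ∑ i, Γ i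
      = R * (Aᵀ * (1 - (m : ℝ)⁻¹ • ∑ i, S i * (S i)ᵀ) * A) * R := by
    simpa only [hΓ', Fintype.card_fin, Matrix.mul_assoc] using
      smul_sum_mul_one_sub_mul (R * Aᵀ) (A * R) fun i => S i * (S i)ᵀ
  rw [havg, mul_div_assoc]
  exact hbound _ _ hS

/-- **Bounds on the normalized Hessian errors `Γᵢ = H^{−1/2}(H − H̃ᵢ)H^{−1/2}`.**
Under the sketching assumption, `‖Γᵢ‖₂ ≤ ϑη` for every `i` and
`‖(1/m)∑ᵢΓᵢ‖₂ ≤ ϑη/√m`, where `ϑ = σmax(AᵀA)/(σmax(AᵀA) + σmin(M))`. -/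
theorem gamma_bounds
    (n d ρ s m : ℕ) (hm : 0 < m)
    (η : ℝ) (hη : η ∈ Set.Ioo (0 : ℝ) 1)
    (A : Matrix (Fin n) (Fin d) ℝ) (hrank : A.rank = ρ)
    (U : Matrix (Fin n) (Fin ρ) ℝ)
    (hUorth : Uᵀ * U = 1)
    (hUA : LinearMap.range U.mulVecLin = LinearMap.range A.mulVecLin)
    (M : Matrix (Fin d) (Fin d) ℝ) (hM : M.PosSemidef)
    (hH : (Aᵀ * A + M).PosDef)
    (S : Fin m → Matrix (Fin n) (Fin s) ℝ)
    (hSi : ∀ i, specNorm (Uᵀ * (S i * (S i)ᵀ) * U - 1) ≤ η)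
    (hS : specNorm (Uᵀ * ((m : ℝ)⁻¹ • ∑ i, S i * (S i)ᵀ) * U - 1) ≤ η / Real.sqrt m)
    (Γ : Fin m → Matrix (Fin d) (Fin d) ℝ)
    (hΓ : ∀ i, Γ i = (Matrix.PosSemidef.sqrt hH.posSemidef)⁻¹
      * ((Aᵀ * A + M) - (Aᵀ * (S i * (S i)ᵀ) * A + M)) * (Matrix.PosSemidef.sqrt hH.posSemidef)⁻¹)
    (ϑ : ℝ)
    (hϑ : ϑ = sigmaMax (Aᵀ * A) / (sigmaMax (Aᵀ * A) + sigmaMin M)) :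
    (∀ i, specNorm (Γ i) ≤ ϑ * η) ∧
      specNorm ((m : ℝ)⁻¹ • ∑ i, Γ i) ≤ ϑ * η / Real.sqrt m :=
  gamma_bounds_general n d ρ s m hm η A U hUorth hUA M hM hH S hSi hS Γ hΓ ϑ hϑ
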